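/- Let c : ℝ² → Fin 2 be the parallel-stripes 2-coloring defined by c(x, y) = (⌊y / (√3/2)⌋ mod 2). Then c is a periodic 2-coloring (with periods u = (1, 0) and v = (0, √3)) and p^per(c) = 1/3; in particular the lower bound 1/3 for periodic 2-colorings is attained. -/

import Mathlib

open MeasureTheory Real

noncomputable section

abbrev Plane := EuclideanSpace ℝ (Fin 2)

def vec (x y : ℝ) : Plane := (WithLp.equiv 2 (Fin 2 → ℝ)).symm ![x, y]

def dir (θ : ℝ) : Plane := vec (Real.cos θ) (Real.sin θ)

/-- The fundamental parallelogram `{t•u + s•v : 0 ≤ t, s < 1}`. -/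
def para (u v : Plane) : Set Plane :=
  {x | ∃ t s : ℝ, 0 ≤ t ∧ t < 1 ∧ 0 ≤ s ∧ s < 1 ∧ x = t • u + s • v}

/-- `p^per(c)` for a periodic coloring with fundamental parallelogram `para u v`. -/
def pper {k : ℕ} (c : Plane → Fin k) (u v : Plane) : ℝ :=
  (1 / (2 * π * (volume (para u v)).toReal)) *
    ∫ a in para u v, ∫ θ in (0:ℝ)..(2*π),
      (if c a = c (a + dir θ) then (1:ℝ) else 0)

open Fin.CommRing in
/-- The parallel-stripes 2-coloring: horizontal strips of width `√3/2`, closed below and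
open above, with alternating colors; the color of `(x, y)` is `⌊y/(√3/2)⌋ mod 2`. -/
def stripes : Plane → Fin 2 := fun x => ((⌊x 1 / (Real.sqrt 3 / 2)⌋ : ℤ) : Fin 2)

/-! The colour of `x` depends only on `x 1`, so by Fubini `p^per` is the average over `θ` of the
proportion of heights `y ∈ [0, √3)` for which `y` and `y + sin θ` lie in bands of equal parity.
For bands of width `h` and a shift `|s| ≤ 2h` this proportion is the triangle wave
`|2h - 2|s|| / 2h`: shifting `s` by `h` swaps the parities and shifting it by `2h` changes nothing,
so only `0 ≤ s ≤ h` needs a computation. It remains to integrate `|√3 - 2|sin θ||`, which by the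
symmetries of `|sin|` reduces to `[0, π/2]`, split at `π/3` where `sin θ = √3/2`. -/

open Set Fin.CommRing

def bandColor (h y : ℝ) : Fin 2 := (⌊y / h⌋ : ℤ)

def sameBand (h s : ℝ) : Set ℝ := {y | bandColor h y = bandColor h (y + s)}

lemma measurable_bandColor (h : ℝ) : Measurable (bandColor h) :=
  measurable_from_top.comp (measurable_id.div_const h).floor

lemma measurableSet_sameBand (h s : ℝ) : MeasurableSet (sameBand h s) :=
  measurableSet_eq_fun (measurable_bandColor h)
    ((measurable_bandColor h).comp (measurable_add_const s))

lemma volume_Ico_union_Ico {a b c d : ℝ} (hab : a ≤ b) (hbc : b ≤ c) (hcd : c ≤ d) :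
    volume.real (Ico a b ∪ Ico c d) = (b - a) + (d - c) := by
  have hdisj : Disjoint (Ico a b) (Ico c d) :=
    Set.disjoint_left.2 fun x hx hx' => (hx.2.trans_le hbc).not_ge hx'.1
  rw [measureReal_union hdisj measurableSet_Ico measure_Ico_lt_top.ne measure_Ico_lt_top.ne,
    Real.volume_real_Ico_of_le hab, Real.volume_real_Ico_of_le hcd]

section Bands

variable {h : ℝ}

lemma bandColor_eq_of_mem_Ico (hh : 0 < h) {n : ℤ} {y : ℝ}
    (hy : y ∈ Ico (n * h) ((n + 1) * h)) :
    bandColor h y = n := by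
  rw [bandColor, Int.floor_eq_iff.2 ⟨(le_div_iff₀ hh).2 hy.1, (div_lt_iff₀ hh).2 hy.2⟩]

lemma bandColor_add_width (hh : h ≠ 0) (y : ℝ) : bandColor h (y + h) = bandColor h y + 1 := by
  rw [bandColor, bandColor, add_div, div_self hh, ← Int.cast_one, Int.floor_add_intCast,
    Int.cast_add, Int.cast_one]

lemma bandColor_add_two_mul_width (hh : h ≠ 0) (y : ℝ) :
    bandColor h (y + 2 * h) = bandColor h y := by
  rw [two_mul, ← add_assoc, bandColor_add_width hh, bandColor_add_width hh, add_assoc]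
  exact add_eq_left.2 rfl

lemma sameBand_add_width (hh : h ≠ 0) (s : ℝ) : sameBand h (s + h) = (sameBand h s)ᶜ := by
  ext y
  have hFin : ∀ a b : Fin 2, a = b + 1 ↔ a ≠ b := by decide
  simp only [sameBand, mem_ofPred_eq, mem_compl_iff, ← add_assoc, bandColor_add_width hh, hFin]

lemma sameBand_add_two_mul_width (hh : h ≠ 0) (s : ℝ) :
    sameBand h (s + 2 * h) = sameBand h s := by
  ext y
  simp only [sameBand, mem_ofPred_eq, ← add_assoc, bandColor_add_two_mul_width hh]

lemma sameBand_inter_Ico_of_le (hh : 0 < h) {s : ℝ} (hs0 : 0 ≤ s) (hsh : s ≤ h) :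
    sameBand h s ∩ Ico 0 (2 * h) = Ico 0 (h - s) ∪ Ico h (2 * h - s) := by
  have color : ∀ (n : ℤ) {y : ℝ}, n * h ≤ y → y < (n + 1) * h → bandColor h y = n :=
    fun n y h₁ h₂ => bandColor_eq_of_mem_Ico hh ⟨h₁, h₂⟩
  ext y
  simp only [sameBand, mem_inter_iff, mem_ofPred_eq, mem_union, mem_Ico]
  constructor
  · rintro ⟨hy, hy0, hy2⟩
    -- outside both intervals, `y` and `y + s` lie in adjacent bands
    by_contra hout
    rcases lt_or_ge y h with hy1 | hy1
    · rw [color 0 (by push_cast; linarith) (by push_cast; linarith),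
        color 1 (by push_cast; grind) (by push_cast; grind)] at hy
      exact absurd hy (by decide)
    · rw [color 1 (by push_cast; grind) (by push_cast; grind),
        color 2 (by push_cast; grind) (by push_cast; grind)] at hy
      exact absurd hy (by decide)
  · rintro (⟨hy0, hy1⟩ | ⟨hy1, hy2⟩)
    · refine ⟨?_, hy0, by linarith⟩
      rw [color 0 (by push_cast; linarith) (by push_cast; linarith),
        color 0 (by push_cast; linarith) (by push_cast; linarith)]
    · refine ⟨?_, by linarith, by linarith⟩
      rw [color 1 (by push_cast; linarith) (by push_cast; linarith),
        color 1 (by push_cast; linarith) (by push_cast; linarith)]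

lemma volume_sameBand_of_nonneg (hh : 0 < h) {s : ℝ} (hs0 : 0 ≤ s) (hs2 : s ≤ 2 * h) :
    volume.real (sameBand h s ∩ Ico 0 (2 * h)) = |2 * h - 2 * s| := by
  rcases le_total s h with hsh | hsh
  · rw [sameBand_inter_Ico_of_le hh hs0 hsh, volume_Ico_union_Ico (by linarith) (by linarith)
      (by linarith), abs_of_nonneg (by linarith)]
    ring
  · obtain ⟨t, rfl⟩ : ∃ t, s = t + h := ⟨s - h, by ring⟩
    have hsplit := measureReal_sdiff_add_inter (μ := volume) (s := Ico 0 (2 * h))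
      (measurableSet_sameBand h t) measure_Ico_lt_top.ne
    rw [sameBand_add_width hh.ne', ← sdiff_eq_compl_inter, eq_sub_of_add_eq hsplit, inter_comm,
      sameBand_inter_Ico_of_le hh (by linarith) (by linarith),
      volume_Ico_union_Ico (by linarith) (by linarith) (by linarith),
      Real.volume_real_Ico_of_le (by linarith), abs_of_nonpos (by linarith)]
    ring

lemma volume_sameBand (hh : 0 < h) {s : ℝ} (hs : |s| ≤ 2 * h) :
    volume.real (sameBand h s ∩ Ico 0 (2 * h)) = |2 * h - 2 * (|s|)| := by
  rcases le_total 0 s with hs0 | hs0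
  · rw [abs_of_nonneg hs0] at hs ⊢
    exact volume_sameBand_of_nonneg hh hs0 hs
  · rw [abs_of_nonpos hs0] at hs ⊢
    rw [← sameBand_add_two_mul_width hh.ne',
      volume_sameBand_of_nonneg hh (by linarith) (by linarith), ← abs_neg]
    ring_nf

lemma integral_ite_bandColor_eq (hh : 0 < h) {s : ℝ} (hs : |s| ≤ 2 * h) :
    ∫ y in Ico 0 (2 * h), (if bandColor h y = bandColor h (y + s) then (1 : ℝ) else 0) =
      |2 * h - 2 * (|s|)| := by
  rw [← volume_sameBand hh hs, ← measureReal_restrict_apply (measurableSet_sameBand h s),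
    ← integral_indicator_one (measurableSet_sameBand h s)]
  simp only [indicator_apply, sameBand, mem_ofPred_eq, Pi.one_apply]

end Bands

lemma integral_Ico_intervalIntegral_swap {f : ℝ → ℝ → ℝ} (hf : Measurable (Function.uncurry f))
    {C : ℝ} (hC : ∀ x y, ‖f x y‖ ≤ C) (a b c d : ℝ) (hcd : c ≤ d) :
    ∫ x in Ico a b, ∫ y in c..d, f x y = ∫ y in c..d, ∫ x in Ico a b, f x y := by
  have : IsFiniteMeasure (volume.restrict (Ico a b)) :=
    isFiniteMeasure_restrict.2 measure_Ico_lt_top.ne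
  have : IsFiniteMeasure (volume.restrict (Ioc c d)) :=
    isFiniteMeasure_restrict.2 measure_Ioc_lt_top.ne
  simp only [intervalIntegral.integral_of_le hcd]
  exact integral_integral_swap ((integrable_const C).mono' hf.aestronglyMeasurable
    (ae_of_all _ fun p => hC p.1 p.2))

lemma integral_const_add_mul_sin (d c a b : ℝ) :
    ∫ θ in a..b, (d + c * sin θ) = d * (b - a) + c * (cos a - cos b) := by
  rw [intervalIntegral.integral_add intervalIntegrable_const
      ((continuous_sin.intervalIntegrable a b).const_mul c),
    intervalIntegral.integral_const_mul, integral_sin, intervalIntegral.integral_const,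
    smul_eq_mul, mul_comm]

lemma integral_abs_sqrt_three_sub_two_mul_sin :
    ∫ θ in (0 : ℝ)..(π / 2), |√3 - 2 * sin θ| = √3 * π / 6 := by
  have hπ := pi_pos
  have sin_le {θ : ℝ} (h₁ : 0 ≤ θ) (h₂ : θ ≤ π / 3) : sin θ ≤ √3 / 2 :=
    sin_pi_div_three ▸ sin_le_sin_of_le_of_le_pi_div_two (by linarith) (by linarith) h₂
  have le_sin {θ : ℝ} (h₁ : π / 3 ≤ θ) (h₂ : θ ≤ π / 2) : √3 / 2 ≤ sin θ :=
    sin_pi_div_three ▸ sin_le_sin_of_le_of_le_pi_div_two (by linarith) h₂ h₁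
  have hcont : Continuous fun θ => |√3 - 2 * sin θ| := by fun_prop
  rw [← intervalIntegral.integral_add_adjacent_intervals (b := π / 3)
    (hcont.intervalIntegrable _ _) (hcont.intervalIntegrable _ _)]
  have below : ∫ θ in (0 : ℝ)..(π / 3), |√3 - 2 * sin θ| =
      ∫ θ in (0 : ℝ)..(π / 3), (√3 + (-2) * sin θ) := by
    refine intervalIntegral.integral_congr fun θ hθ => ?_
    rw [uIcc_of_le (by positivity)] at hθ
    rw [abs_of_nonneg (by linarith [sin_le hθ.1 hθ.2])]
    ring
  have above : ∫ θ in (π / 3)..(π / 2), |√3 - 2 * sin θ| =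
      ∫ θ in (π / 3)..(π / 2), (-√3 + 2 * sin θ) := by
    refine intervalIntegral.integral_congr fun θ hθ => ?_
    rw [uIcc_of_le (by linarith)] at hθ
    rw [abs_of_nonpos (by linarith [le_sin hθ.1 hθ.2])]
    ring
  rw [below, above, integral_const_add_mul_sin, integral_const_add_mul_sin, cos_zero,
    cos_pi_div_two, cos_pi_div_three]
  ring

lemma integral_abs_sqrt_three_sub_two_mul_abs_sin :
    ∫ θ in (0 : ℝ)..(2 * π), |√3 - 2 * (|sin θ|)| = 2 * √3 * π / 3 := by
  set f : ℝ → ℝ := fun θ => |√3 - 2 * (|sin θ|)| with hf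
  have hcont : Continuous f := by fun_prop
  have hper : Function.Periodic f π := fun θ => by simp only [hf, sin_add_pi, abs_neg]
  have hrefl : ∀ θ, f (π - θ) = f θ := fun θ => by simp only [hf, sin_pi_sub]
  have half : ∫ θ in (0 : ℝ)..(π / 2), f θ = √3 * π / 6 := by
    rw [← integral_abs_sqrt_three_sub_two_mul_sin]
    refine intervalIntegral.integral_congr fun θ hθ => ?_
    rw [uIcc_of_le (by positivity)] at hθ
    simp only [hf, abs_of_nonneg (sin_nonneg_of_nonneg_of_le_pi hθ.1 (by linarith [pi_pos, hθ.2]))]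
  have period : ∫ θ in (0 : ℝ)..π, f θ = 2 * ∫ θ in (0 : ℝ)..(π / 2), f θ := by
    rw [← intervalIntegral.integral_add_adjacent_intervals (b := π / 2)
      (hcont.intervalIntegrable _ _) (hcont.intervalIntegrable _ _)]
    have := intervalIntegral.integral_comp_sub_left (a := 0) (b := π / 2) f π
    simp only [hrefl, sub_zero] at this
    rw [this, show π - π / 2 = π / 2 by ring]
    ring
  rw [two_mul, hper.intervalIntegral_add_eq_add 0 π fun _ _ => hcont.intervalIntegrable _ _,
    zero_add, period, half]
  ring

def planeEquivProd : Plane ≃ᵐ ℝ × ℝ :=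
  (MeasurableEquiv.toLp 2 (Fin 2 → ℝ)).symm.trans MeasurableEquiv.finTwoArrow

lemma measurePreserving_planeEquivProd : MeasurePreserving planeEquivProd volume volume :=
  (volume_preserving_finTwoArrow ℝ).comp
    (EuclideanSpace.volume_preserving_symm_measurableEquiv_toLp (Fin 2))

lemma planeEquivProd_apply (x : Plane) : planeEquivProd x = (x 0, x 1) := rfl

lemma para_vec_eq_preimage {a b : ℝ} (ha : 0 < a) (hb : 0 < b) :
    para (vec a 0) (vec 0 b) = planeEquivProd ⁻¹' (Ico 0 a ×ˢ Ico 0 b) := by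
  ext x
  simp only [para, mem_ofPred_eq, mem_preimage, planeEquivProd_apply, mem_prod, mem_Ico]
  constructor
  · rintro ⟨t, s, ht0, ht1, hs0, hs1, rfl⟩
    have c0 : (t • vec a 0 + s • vec 0 b) 0 = t * a := by simp [vec]
    have c1 : (t • vec a 0 + s • vec 0 b) 1 = s * b := by simp [vec]
    rw [c0, c1]
    exact ⟨⟨by positivity, by nlinarith⟩, ⟨by positivity, by nlinarith⟩⟩
  · rintro ⟨⟨h00, h01⟩, h10, h11⟩
    refine ⟨x 0 / a, x 1 / b, by positivity, (div_lt_one ha).2 h01, by positivity,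
      (div_lt_one hb).2 h11, ?_⟩
    ext i
    fin_cases i <;> simp [vec, ha.ne', hb.ne']

lemma setIntegral_para_vec {a b : ℝ} (ha : 0 < a) (hb : 0 < b) (F : ℝ → ℝ) :
    ∫ x in para (vec a 0) (vec 0 b), F (x 1) = a * ∫ y in Ico 0 b, F y := by
  rw [para_vec_eq_preimage ha hb]
  refine (measurePreserving_planeEquivProd.setIntegral_preimage_emb
    planeEquivProd.measurableEmbedding (fun p => F p.2) _).trans ?_
  rw [Measure.volume_eq_prod]
  simpa [ha.le] using setIntegral_prod_mul (μ := volume) (ν := volume) (fun _ => (1 : ℝ)) F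
    (Ico 0 a) (Ico 0 b)

lemma volume_para_vec {a b : ℝ} (ha : 0 < a) (hb : 0 < b) :
    (volume (para (vec a 0) (vec 0 b))).toReal = a * b := by
  have := setIntegral_para_vec ha hb fun _ => 1
  simp only [integral_const, measureReal_restrict_apply_univ, Real.volume_real_Ico_of_le hb.le,
    smul_eq_mul, mul_one, sub_zero] at this
  exact this

lemma stripes_eq_bandColor (x : Plane) : stripes x = bandColor (√3 / 2) (x 1) := rfl

lemma measurable_stripes : Measurable stripes :=
  (measurable_bandColor _).comp (by fun_prop)

lemma linearIndependent_vec_one_zero_vec_zero_sqrt_three :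
    LinearIndependent ℝ ![vec 1 0, vec 0 √3] := by
  rw [linearIndependent_fin2]
  refine ⟨fun h => ?_, fun a h => ?_⟩
  · have : √3 = 0 := congr_fun (congr_arg WithLp.ofLp h) 1
    simp at this
  · have : a * 0 = 1 := congr_fun (congr_arg WithLp.ofLp h) 0
    simp at this

lemma stripes_add_vec_one_zero (x : Plane) : stripes (x + vec 1 0) = stripes x := by
  simp [stripes_eq_bandColor, vec]

lemma stripes_add_vec_zero_sqrt_three (x : Plane) : stripes (x + vec 0 √3) = stripes x := by
  have hh : √3 / 2 ≠ 0 := by positivity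
  have := bandColor_add_two_mul_width hh (x 1)
  rw [mul_div_cancel₀ _ two_ne_zero] at this
  simpa [stripes_eq_bandColor, vec] using this

lemma pper_stripes : pper stripes (vec 1 0) (vec 0 √3) = 1 / 3 := by
  set h := √3 / 2
  have hh : 0 < h := by positivity
  have hsqrt : √3 = 2 * h := by ring
  set g : ℝ → ℝ → ℝ := fun y θ => if bandColor h y = bandColor h (y + sin θ) then 1 else 0
    with hg
  have hg_meas : Measurable (Function.uncurry g) :=
    Measurable.ite (measurableSet_eq_fun ((measurable_bandColor h).comp measurable_fst)
      ((measurable_bandColor h).comp (by fun_prop))) measurable_const measurable_const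
  have hg_bound : ∀ y θ, ‖g y θ‖ ≤ 1 := fun y θ => by simp only [hg]; split_ifs <;> simp
  have hsin : ∀ θ, |sin θ| ≤ 2 * h := fun θ =>
    (abs_sin_le_one θ).trans (hsqrt ▸ Real.le_sqrt_of_sq_le (by norm_num))
  have key : ∫ y in Ico 0 √3, ∫ θ in (0 : ℝ)..(2 * π), g y θ = 2 * √3 * π / 3 := by
    rw [hsqrt, integral_Ico_intervalIntegral_swap hg_meas hg_bound _ _ _ _ (by positivity),
      intervalIntegral.integral_congr fun θ _ => integral_ite_bandColor_eq hh (hsin θ),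
      ← hsqrt, integral_abs_sqrt_three_sub_two_mul_abs_sin]
  rw [pper, volume_para_vec one_pos (by positivity)]
  have hinner : ∀ a : Plane, (∫ θ in (0 : ℝ)..(2 * π),
      if stripes a = stripes (a + dir θ) then (1 : ℝ) else 0) =
        ∫ θ in (0 : ℝ)..(2 * π), g (a 1) θ :=
    fun _ => rfl
  simp only [hinner]
  rw [setIntegral_para_vec one_pos (by positivity) fun y => ∫ θ in (0 : ℝ)..(2 * π), g y θ, key]
  field_simp

theorem stmt11 :
    Measurable stripes ∧
    LinearIndependent ℝ ![vec 1 0, vec 0 (Real.sqrt 3)] ∧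
    (∀ x : Plane, stripes (x + vec 1 0) = stripes x ∧
      stripes (x + vec 0 (Real.sqrt 3)) = stripes x) ∧
    pper stripes (vec 1 0) (vec 0 (Real.sqrt 3)) = 1 / 3 :=
  ⟨measurable_stripes, linearIndependent_vec_one_zero_vec_zero_sqrt_three,
    fun x => ⟨stripes_add_vec_one_zero x, stripes_add_vec_zero_sqrt_three x⟩, pper_stripes⟩

end
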